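/- arXiv:2110.08605 — 4 statements merged into one kernel-verified Lean document; each statement's English description precedes it below -/
import Mathlib

section
/- (Lemma 1, explicit form.) Assume c := S_{11}·min_{2≤i≤K} S̃_{i·} − 2·max_{2≤j≤K} S_{1j}·S̃_{1·} > 0. Set ε := c·τ_1 / (2·S̃_{1·}·max_{2≤i,j≤K} S_{ij}) and c' := min{ S_{11}/S̃_{1·}, 1/( 2·S̃_{1·}²/c + K·min_{2≤i≤K} S̃_{i·} / max_{2≤i,j≤K} S_{ij} ) }. Then for every nonempty subset C ⊆ {1,…,N} such that (C ⊆ I_1 or I_1 ⊆ C) and |C| ≤ n_1 + ε·N, one has G(C) − G(I_1) ≤ −c' · | |C| − n_1 | / N. -/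
/-!
The two rows of the confusion matrix add up to `τ`, so the denominator of `G C` is `x ⬝ S̃` for
the first row `x` of `R C`, and `G C = xᵀ S x / x ⬝ S̃`. If `C ⊆ I₁`, then `x` is supported on
block `1` and `G C = (|C| / N) · S₁₁ / S̃₁`, which is linear in `|C|` with slope `S₁₁ / S̃₁ ≥ c'`.
If `I₁ ⊆ C`, then `x = τ₁ e₁ + y` with `y ≥ 0` supported off block `1` and of mass
`δ = (|C| - n₁) / N`. Bounding the cross term by `max S₁ⱼ · δ`, the off-block quadratic term by
`max Sᵢⱼ · δ²` and the extra mass of the denominator from below by `min S̃ᵢ · δ` reduces the claim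
to an inequality between polynomials in `δ`, which holds as long as `δ ≤ ε`.
-/

open Finset

section QuadraticForm

variable {ι : Type*} [Fintype ι] (S : Matrix ι ι ℝ) (St x : ι → ℝ)

noncomputable def quadRatio : ℝ := (∑ i, ∑ j, x i * S i j * x j) / ∑ i, x i * St i

lemma div_add_eq_quadRatio (τ y : ι → ℝ) (hSt : ∀ i, St i = ∑ j, S i j * τ j)
    (hxy : ∀ j, x j + y j = τ j) :
    (∑ i, ∑ j, x i * S i j * x j) /
        ((∑ i, ∑ j, x i * S i j * x j) + ∑ i, ∑ j, x i * S i j * y j) = quadRatio S St x := by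
  congr 1
  simp only [← sum_add_distrib, hSt, mul_sum, ← hxy]
  exact sum_congr rfl fun i _ => sum_congr rfl fun j _ => by ring

lemma sum_sum_mul_eq_of_isSymm [DecidableEq ι] (hS : S.IsSymm) (k : ι) :
    ∑ i, ∑ j, x i * S i j * x j = x k ^ 2 * S k k + 2 * x k * ∑ j ∈ {k}ᶜ, S k j * x j
      + ∑ i ∈ {k}ᶜ, ∑ j ∈ {k}ᶜ, x i * S i j * x j := by
  have hrow : ∀ i, ∑ j, x i * S i j * x j = x i * S i k * x k + ∑ j ∈ {k}ᶜ, x i * S i j * x j :=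
    fun i => Fintype.sum_eq_add_sum_compl k _
  have hcol : ∑ i ∈ {k}ᶜ, x i * S i k * x k = x k * ∑ j ∈ {k}ᶜ, S k j * x j := by
    rw [mul_sum]
    exact sum_congr rfl fun j _ => by rw [← hS.apply j k]; ring
  have hrowk : ∑ j ∈ {k}ᶜ, x k * S k j * x j = x k * ∑ j ∈ {k}ᶜ, S k j * x j := by
    rw [mul_sum]
    exact sum_congr rfl fun j _ => by ring
  rw [sum_congr rfl fun i _ => hrow i, sum_add_distrib,
    Fintype.sum_eq_add_sum_compl k (fun i => x i * S i k * x k),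
    Fintype.sum_eq_add_sum_compl k (fun i => ∑ j ∈ {k}ᶜ, x i * S i j * x j), hcol, hrowk]
  ring

lemma quadRatio_of_eq_zero {k : ι} (hx : ∀ j ≠ k, x j = 0) :
    quadRatio S St x = x k * S k k / St k := by
  have hquad : ∑ i, ∑ j, x i * S i j * x j = x k * (x k * S k k) := by
    rw [Fintype.sum_eq_single k fun i hi => by simp [hx i hi],
      Fintype.sum_eq_single k fun j hj => by simp [hx j hj]]
    ring
  have hlin : ∑ i, x i * St i = x k * St k := Fintype.sum_eq_single k fun i hi => by simp [hx i hi]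
  rcases eq_or_ne (x k) 0 with hxk | hxk
  · simp [quadRatio, hquad, hlin, hxk]
  · rw [quadRatio, hquad, hlin, mul_div_mul_left _ _ hxk]

end QuadraticForm

section SumBounds

variable {ι : Type*} {s : Finset ι} {a x : ι → ℝ} {m : ℝ}

lemma sum_mul_le_mul_sum (ha : ∀ j ∈ s, a j ≤ m) (hx : ∀ j ∈ s, 0 ≤ x j) :
    ∑ j ∈ s, a j * x j ≤ m * ∑ j ∈ s, x j := by
  rw [mul_sum]
  exact sum_le_sum fun j hj => mul_le_mul_of_nonneg_right (ha j hj) (hx j hj)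

lemma mul_sum_le_sum_mul (ha : ∀ j ∈ s, m ≤ a j) (hx : ∀ j ∈ s, 0 ≤ x j) :
    m * ∑ j ∈ s, x j ≤ ∑ j ∈ s, x j * a j := by
  rw [mul_sum]
  exact sum_le_sum fun j hj => by rw [mul_comm]; exact mul_le_mul_of_nonneg_left (ha j hj) (hx j hj)

lemma sum_sum_mul_le_mul_sq {S : ι → ι → ℝ} (hS : ∀ i ∈ s, ∀ j ∈ s, S i j ≤ m)
    (hx : ∀ j ∈ s, 0 ≤ x j) :
    ∑ i ∈ s, ∑ j ∈ s, x i * S i j * x j ≤ m * (∑ j ∈ s, x j) ^ 2 := by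
  rw [sq, sum_mul_sum, mul_sum]
  refine sum_le_sum fun i hi => ?_
  rw [mul_sum]
  exact sum_le_sum fun j hj => by nlinarith [hS i hi j hj, mul_nonneg (hx i hi) (hx j hj)]

end SumBounds

section RatioBound

variable {τ s σ μ m₁ M c c' δ : ℝ}

lemma mul_add_le_one_of_le_one_div {a b K : ℝ} (ha : 0 ≤ a) (hb : 0 ≤ b) (hK : 1 ≤ K)
    (hc' : c' ≤ 1 / (a + K * b)) : c' * (a + b) ≤ 1 := by
  rcases le_or_gt c' 0 with hneg | hpos
  · nlinarith [mul_nonpos_of_nonpos_of_nonneg hneg (add_nonneg ha hb)]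
  · have hden : 0 < a + K * b := one_div_pos.1 (hpos.trans_le hc')
    rw [le_div_iff₀ hden] at hc'
    nlinarith

lemma div_sub_div_le_neg_mul {L Q T : ℝ} (hτ : 0 < τ) (hσ : 0 < σ) (hμ : 0 < μ) (hM : 0 < M)
    (hm₁ : 0 ≤ m₁) (hc'0 : 0 ≤ c') (hc : c = s * μ - 2 * m₁ * σ) (hcpos : 0 < c)
    (hc' : c' * (2 * σ ^ 2 / c + μ / M) ≤ 1) (hδc : 2 * σ * M * δ ≤ c * τ) (hδ : 0 ≤ δ)
    (hL : L ≤ m₁ * δ) (hQ : Q ≤ M * δ ^ 2) (hT : μ * δ ≤ T) :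
    (τ ^ 2 * s + 2 * τ * L + Q) / (τ * σ + T) - τ * s / σ ≤ -c' * δ := by
  have hD : 0 < τ * σ + T := by nlinarith
  have hcs : c ≤ s * μ := by nlinarith
  have hc'M : c' * (2 * σ ^ 2 * M + c * μ) ≤ c * M := by
    have h := mul_le_mul_of_nonneg_right hc' (by positivity : (0:ℝ) ≤ c * M)
    rwa [one_mul, show c' * (2 * σ ^ 2 / c + μ / M) * (c * M) = c' * (2 * σ ^ 2 * M + c * μ) by
      field_simp] at h
  have hhalf : 2 * c' * (σ * μ * δ + τ * σ ^ 2) ≤ τ * c := by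
    nlinarith [mul_le_mul_of_nonneg_left hδc (by positivity : (0:ℝ) ≤ c' * μ),
      mul_le_mul_of_nonneg_left hc'M hτ.le]
  -- after clearing denominators `T` has coefficient `c' * δ * σ - τ * s ≤ 0`,
  -- so `T` may be replaced by its lower bound `μ * δ`
  have hcoef : c' * δ * σ ≤ τ * s := by
    have hc'μ : c' * μ ≤ M := by nlinarith [mul_nonneg hc'0 (by positivity : (0:ℝ) ≤ 2 * σ ^ 2 * M)]
    have h := mul_le_mul_of_nonneg_left hc'μ (by positivity : (0:ℝ) ≤ 2 * σ * δ)
    have hs : 0 < s := pos_of_mul_pos_left (hcpos.trans_le hcs) hμ.le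
    have : μ * (2 * (c' * δ * σ)) ≤ μ * (τ * s) := by nlinarith
    nlinarith [le_of_mul_le_mul_left this hμ]
  -- `δ` times this is the claim once `L`, `Q`, `T` are replaced by their bounds
  have hbracket : -τ * c + σ * M * δ + c' * (σ * μ * δ + τ * σ ^ 2) ≤ 0 := by linarith
  rw [div_sub_div _ _ hD.ne' hσ.ne', div_le_iff₀ (by positivity)]
  subst hc
  linear_combination mul_le_mul_of_nonneg_left hL (by positivity : (0:ℝ) ≤ 2 * τ * σ)
    + mul_le_mul_of_nonneg_left hQ hσ.le
    + mul_le_mul_of_nonneg_left hT (sub_nonneg.2 hcoef) + mul_le_mul_of_nonneg_left hbracket hδ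

end RatioBound

lemma quadRatio_sub_le {ι : Type*} [Fintype ι] [DecidableEq ι] [Nontrivial ι]
    {S : Matrix ι ι ℝ} (hS : S.IsSymm) (hSpos : ∀ i j, 0 < S i j) {St x : ι → ℝ}
    (hx : ∀ i, 0 ≤ x i) {k : ι} {μ m₁ M c c' K : ℝ}
    (hμ : ∀ i ≠ k, μ ≤ St i) (hm₁ : ∀ j ≠ k, S k j ≤ m₁) (hM : ∀ i j, i ≠ k → j ≠ k → S i j ≤ M)
    (hxk : 0 < x k) (hσ : 0 < St k) (hc : c = S k k * μ - 2 * m₁ * St k) (hcpos : 0 < c)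
    (hK : 1 ≤ K) (hc' : c' ≤ 1 / (2 * St k ^ 2 / c + K * μ / M))
    (hδ : ∑ j ∈ {k}ᶜ, x j ≤ c * x k / (2 * St k * M)) :
    quadRatio S St x - x k * S k k / St k ≤ -c' * ∑ j ∈ {k}ᶜ, x j := by
  obtain ⟨j, hj⟩ := exists_ne k
  have hm₁pos : 0 ≤ m₁ := (hSpos k j).le.trans (hm₁ j hj)
  have hMpos : 0 < M := (hSpos j j).trans_le (hM j j hj hj)
  have hμpos : 0 < μ :=
    pos_of_mul_pos_right (by nlinarith [hSpos k k] : 0 < S k k * μ) (hSpos k k).le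
  have hδ0 : 0 ≤ ∑ j ∈ {k}ᶜ, x j := sum_nonneg fun j _ => hx j
  wlog hc'0 : 0 ≤ c' generalizing c'
  · refine (this (c' := 0) (one_div_nonneg.2 (by positivity)) le_rfl).trans ?_
    nlinarith
  rw [mul_div_assoc K] at hc'
  have hc'one := mul_add_le_one_of_le_one_div (div_nonneg (by positivity) hcpos.le)
    (div_nonneg hμpos.le hMpos.le) hK hc'
  rw [le_div_iff₀ (by positivity), mul_comm] at hδ
  rw [quadRatio, sum_sum_mul_eq_of_isSymm S x hS k, Fintype.sum_eq_add_sum_compl k]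
  have hcompl : ∀ j ∈ ({k}ᶜ : Finset ι), j ≠ k := fun j hj => by simpa using hj
  exact div_sub_div_le_neg_mul hxk hσ hμpos hMpos hm₁pos hc'0 hc hcpos hc'one hδ hδ0
    (sum_mul_le_mul_sum (fun j hj => hm₁ j (hcompl j hj)) fun j _ => hx j)
    (sum_sum_mul_le_mul_sq (fun i hi j hj => hM i j (hcompl i hi) (hcompl j hj)) fun j _ => hx j)
    (mul_sum_le_sum_mul (fun j hj => hμ j (hcompl j hj)) fun j _ => hx j)

section ConfusionRow

variable {α ι : Type*} [DecidableEq ι] (g : α → ι) (N : ℕ)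

noncomputable def confusionRow (C : Finset α) (b : ι) : ℝ := #{u ∈ C | g u = b} / N

lemma confusionRow_nonneg (C : Finset α) (b : ι) : 0 ≤ confusionRow g N C b := by
  unfold confusionRow; positivity

lemma sum_compl_confusionRow [Fintype ι] (C : Finset α) (k : ι) :
    ∑ b ∈ {k}ᶜ, confusionRow g N C b = #C / N - confusionRow g N C k := by
  have hsum : ∑ b, confusionRow g N C b = #C / N := by
    simp only [confusionRow]
    rw [← sum_div, card_eq_sum_card_fiberwise fun u _ => mem_univ (g u), Nat.cast_sum]
  rw [← hsum, Fintype.sum_eq_add_sum_compl k]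
  ring

variable [Fintype α]

lemma confusionRow_add_compl [DecidableEq α] (C : Finset α) (b : ι) :
    confusionRow g N C b + confusionRow g N Cᶜ b = confusionRow g N univ b := by
  rw [confusionRow, confusionRow, confusionRow, ← add_div, ← Nat.cast_add,
    ← card_union_of_disjoint (disjoint_filter_filter disjoint_compl_right), ← filter_union,
    union_compl]

variable {g N}

lemma confusionRow_eq_zero_of_subset {C : Finset α} {k b : ι}
    (hC : C ⊆ univ.filter fun u => g u = k) (hb : b ≠ k) : confusionRow g N C b = 0 := by
  have hempty : {u ∈ C | g u = b} = ∅ :=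
    filter_eq_empty_iff.2 fun u hu hub => hb (hub ▸ (mem_filter.1 (hC hu)).2)
  rw [confusionRow, hempty, card_empty, Nat.cast_zero, zero_div]

lemma confusionRow_of_subset {C : Finset α} {k : ι} (hC : C ⊆ univ.filter fun u => g u = k) :
    confusionRow g N C k = #C / N := by
  rw [confusionRow, filter_true_of_mem fun u hu => (mem_filter.1 (hC hu)).2]

lemma confusionRow_of_supset {C : Finset α} {k : ι} (hC : (univ.filter fun u => g u = k) ⊆ C) :
    confusionRow g N C k = confusionRow g N univ k := by
  have hfiber : {u ∈ C | g u = k} = univ.filter fun u => g u = k := by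
    ext u
    simp only [mem_filter, mem_univ, true_and]
    exact ⟨And.right, fun h => ⟨hC (mem_filter.2 ⟨mem_univ u, h⟩), h⟩⟩
  rw [confusionRow, confusionRow, hfiber]

lemma quadRatio_confusionRow_of_subset [Fintype ι] (S : Matrix ι ι ℝ) (St : ι → ℝ)
    {C : Finset α} {k : ι} (hC : C ⊆ univ.filter fun u => g u = k) :
    quadRatio S St (confusionRow g N C) = #C / N * S k k / St k := by
  rw [quadRatio_of_eq_zero S St _ fun b hb => confusionRow_eq_zero_of_subset hC hb,
    confusionRow_of_subset hC]

lemma quadRatio_confusionRow_sub_of_subset [Fintype ι] {S : Matrix ι ι ℝ} {St : ι → ℝ}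
    {C D : Finset α} {k : ι} {c' : ℝ} (hCD : C ⊆ D) (hD : D ⊆ univ.filter fun u => g u = k)
    (hc' : c' ≤ S k k / St k) :
    quadRatio S St (confusionRow g N C) - quadRatio S St (confusionRow g N D) ≤
      -c' * |(#C : ℝ) - #D| / N := by
  have hcard : (#C : ℝ) ≤ #D := by exact_mod_cast card_le_card hCD
  rw [quadRatio_confusionRow_of_subset S St (hCD.trans hD), quadRatio_confusionRow_of_subset S St hD,
    abs_of_nonpos (by linarith)]
  linear_combination
    mul_le_mul_of_nonneg_left hc' (div_nonneg (sub_nonneg.2 hcard) (Nat.cast_nonneg N))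

end ConfusionRow

theorem stmt_4_general (N K : ℕ) (hK : 2 ≤ K)
    (g : Fin N → Fin K)
    (k₁ : Fin K)
    (S : Matrix (Fin K) (Fin K) ℝ) (hSsymm : S.IsSymm) (hSpos : ∀ i j, 0 < S i j)
    (τ : Fin K → ℝ)
    (hτ : ∀ k, τ k = ((Finset.univ.filter fun u => g u = k).card : ℝ) / N)
    (St : Fin K → ℝ) (hSt : ∀ i, St i = ∑ j, S i j * τ j)
    (I₁ : Finset (Fin N)) (hI₁ : I₁ = Finset.univ.filter fun u => g u = k₁)
    (hI₁ne : I₁.Nonempty)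
    (R : Finset (Fin N) → Fin 2 → Fin K → ℝ)
    (hR0 : ∀ C b, R C 0 b = ((C.filter fun u => g u = b).card : ℝ) / N)
    (hR1 : ∀ C b, R C 1 b = (((Cᶜ).filter fun u => g u = b).card : ℝ) / N)
    (G : Finset (Fin N) → ℝ)
    (hG : ∀ C, G C = (∑ i, ∑ j, R C 0 i * S i j * R C 0 j) /
        ((∑ i, ∑ j, R C 0 i * S i j * R C 0 j) + ∑ i, ∑ j, R C 0 i * S i j * R C 1 j))
    (minSt : ℝ) (hminSt : ∀ i : Fin K, i ≠ k₁ → minSt ≤ St i)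
    (maxS1 : ℝ) (hmaxS1 : ∀ j : Fin K, j ≠ k₁ → S k₁ j ≤ maxS1)
    (maxS : ℝ) (hmaxS : ∀ i j : Fin K, i ≠ k₁ → j ≠ k₁ → S i j ≤ maxS)
    (c : ℝ) (hc : c = S k₁ k₁ * minSt - 2 * maxS1 * St k₁) (hcpos : 0 < c)
    (ε : ℝ) (hε : ε = c * τ k₁ / (2 * St k₁ * maxS))
    (c' : ℝ)
    (hc' : c' = min (S k₁ k₁ / St k₁) (1 / (2 * St k₁ ^ 2 / c + K * minSt / maxS))) :
    ∀ C : Finset (Fin N), C.Nonempty → (C ⊆ I₁ ∨ I₁ ⊆ C) →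
      (C.card : ℝ) ≤ (I₁.card : ℝ) + ε * N →
      G C - G I₁ ≤ -c' * |(C.card : ℝ) - (I₁.card : ℝ)| / N := by
  intro C _ hCI hcard
  have hτx : τ = confusionRow g N univ := funext hτ
  have hGx : ∀ C, G C = quadRatio S St (confusionRow g N C) := fun C => by
    rw [hG, show R C 0 = confusionRow g N C from funext (hR0 C)]
    exact div_add_eq_quadRatio S St _ τ (R C 1) hSt fun j => by
      rw [hR1, hτx]; exact confusionRow_add_compl g N C j
  have hNpos : (0 : ℝ) < N := by obtain ⟨u, -⟩ := hI₁ne; exact_mod_cast u.pos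
  have hτ₁ : τ k₁ = #I₁ / N := by rw [hτ, hI₁]
  have hτ₁pos : 0 < τ k₁ := by rw [hτ₁]; have := hI₁ne.card_pos; positivity
  have hσ : 0 < St k₁ := by
    rw [hSt]
    exact sum_pos' (fun j _ => mul_nonneg (hSpos k₁ j).le (hτx ▸ confusionRow_nonneg g N univ j))
      ⟨k₁, mem_univ _, mul_pos (hSpos k₁ k₁) hτ₁pos⟩
  rcases hCI with hCI | hIC
  · rw [hGx, hGx]
    exact quadRatio_confusionRow_sub_of_subset hCI hI₁.le (hc' ▸ min_le_left _ _)
  · have hcardle : (#I₁ : ℝ) ≤ #C := by exact_mod_cast card_le_card hIC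
    have hxk : confusionRow g N C k₁ = τ k₁ := by rw [confusionRow_of_supset (hI₁ ▸ hIC), hτx]
    have hδ : ∑ b ∈ {k₁}ᶜ, confusionRow g N C b = (#C - #I₁) / N := by
      rw [sum_compl_confusionRow, hxk, hτ₁, sub_div]
    have : Nontrivial (Fin K) := Fin.nontrivial_iff_two_le.2 hK
    rw [hGx, hGx, quadRatio_confusionRow_of_subset S St hI₁.le, ← hτ₁,
      abs_of_nonneg (by linarith), mul_div_assoc (-c'), ← hδ, ← hxk]
    refine quadRatio_sub_le hSsymm hSpos (confusionRow_nonneg g N C) hminSt hmaxS1 hmaxS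
      (hxk ▸ hτ₁pos) hσ hc hcpos (Nat.one_le_cast.2 (by omega)) (hc' ▸ min_le_right _ _) ?_
    rw [hδ, hxk, ← hε, div_le_iff₀ hNpos]
    linarith

theorem stmt_4 (N K : ℕ) (hN : 1 ≤ N) (hK : 2 ≤ K)
    (g : Fin N → Fin K)
    (k₁ : Fin K) (hk₁ : (k₁ : ℕ) = 0)
    (S : Matrix (Fin K) (Fin K) ℝ) (hSsymm : S.IsSymm) (hSpos : ∀ i j, 0 < S i j)
    (τ : Fin K → ℝ)
    (hτ : ∀ k, τ k = ((Finset.univ.filter fun u => g u = k).card : ℝ) / N)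
    (St : Fin K → ℝ) (hSt : ∀ i, St i = ∑ j, S i j * τ j)
    (I₁ : Finset (Fin N)) (hI₁ : I₁ = Finset.univ.filter fun u => g u = k₁)
    (hI₁ne : I₁.Nonempty)
    (R : Finset (Fin N) → Fin 2 → Fin K → ℝ)
    (hR0 : ∀ C b, R C 0 b = ((C.filter fun u => g u = b).card : ℝ) / N)
    (hR1 : ∀ C b, R C 1 b = (((Cᶜ).filter fun u => g u = b).card : ℝ) / N)
    (G : Finset (Fin N) → ℝ)
    (hG : ∀ C, G C = (∑ i, ∑ j, R C 0 i * S i j * R C 0 j) /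
        ((∑ i, ∑ j, R C 0 i * S i j * R C 0 j) + ∑ i, ∑ j, R C 0 i * S i j * R C 1 j))
    (minSt : ℝ) (hminSt : ∀ i : Fin K, i ≠ k₁ → minSt ≤ St i)
    (hminSt' : ∃ i : Fin K, i ≠ k₁ ∧ minSt = St i)
    (maxS1 : ℝ) (hmaxS1 : ∀ j : Fin K, j ≠ k₁ → S k₁ j ≤ maxS1)
    (hmaxS1' : ∃ j : Fin K, j ≠ k₁ ∧ maxS1 = S k₁ j)
    (maxS : ℝ) (hmaxS : ∀ i j : Fin K, i ≠ k₁ → j ≠ k₁ → S i j ≤ maxS)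
    (hmaxS' : ∃ i j : Fin K, i ≠ k₁ ∧ j ≠ k₁ ∧ maxS = S i j)
    (c : ℝ) (hc : c = S k₁ k₁ * minSt - 2 * maxS1 * St k₁) (hcpos : 0 < c)
    (ε : ℝ) (hε : ε = c * τ k₁ / (2 * St k₁ * maxS))
    (c' : ℝ)
    (hc' : c' = min (S k₁ k₁ / St k₁) (1 / (2 * St k₁ ^ 2 / c + K * minSt / maxS))) :
    ∀ C : Finset (Fin N), C.Nonempty → (C ⊆ I₁ ∨ I₁ ⊆ C) →
      (C.card : ℝ) ≤ (I₁.card : ℝ) + ε * N →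
      G C - G I₁ ≤ -c' * |(C.card : ℝ) - (I₁.card : ℝ)| / N :=
  stmt_4_general N K hK g k₁ S hSsymm hSpos τ hτ St hSt I₁ hI₁ hI₁ne R hR0 hR1 G hG minSt hminSt
    maxS1 hmaxS1 maxS hmaxS c hc hcpos ε hε c' hc'
end

section
/- (Lemma 1, Case n > n_1.) Assume c := S_{11}·min_{2≤i≤K} S̃_{i·} − 2·max_{2≤j≤K} S_{1j}·S̃_{1·} > 0 and set ε := c·τ_1 / (2·S̃_{1·}·max_{2≤i,j≤K} S_{ij}). Then for every subset C ⊆ {1,…,N} with I_1 ⊆ C and |C| − n_1 ≤ ε·N, one has G(C) − G(I_1) ≤ −( 2·S̃_{1·}²/c + K·min_{2≤i≤K} S̃_{i·} / max_{2≤i,j≤K} S_{ij} )^{-1} · (|C| − n_1)/N. -/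
/-!
Write `x` for the first row of the confusion matrix `R(C)`. The two rows of `R` add up to `τ`,
so the denominator of `G(C)` is `∑ᵢ xᵢ S̃ᵢ`; and `I₁ ⊆ C` forces `x₁ = τ₁`, while the remaining
entries sum to `δ = (|C| - n₁)/N`. Splitting off the first block,
`G(C) = (τ₁² S₁₁ + 2 τ₁ L + Q) / (τ₁ S̃₁ + T)` with `L ≤ (max S₁ⱼ) δ`, `Q ≤ (max Sᵢⱼ) δ²` and
`T ≥ (min S̃ᵢ) δ`, whereas `G(I₁) = S₁₁ τ₁ / S̃₁`. After clearing denominators the claim is a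
polynomial inequality that is affine and nonincreasing in `T`, so it suffices to check it at
`T = (min S̃ᵢ) δ`, where it follows from `δ ≤ ε`.
-/

open Finset

theorem card_filter_add_card_filter_compl {α : Type*} [Fintype α] [DecidableEq α]
    (C : Finset α) (p : α → Prop) [DecidablePred p] :
    #(C.filter p) + #(Cᶜ.filter p) = #(univ.filter p) := by
  rw [← card_union_of_disjoint (disjoint_filter_filter disjoint_compl_right), ← filter_union,
    union_compl]

theorem filter_eq_filter_univ_of_subset {α : Type*} [Fintype α] {C : Finset α} {p : α → Prop}
    [DecidablePred p] (h : univ.filter p ⊆ C) : C.filter p = univ.filter p := by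
  ext u
  simp only [mem_filter, mem_univ, true_and, and_iff_right_iff_imp]
  exact fun hu => h (by simpa using hu)

theorem sum_card_filter_fiber_eq_card {α β : Type*} [Fintype β] [DecidableEq β] (g : α → β)
    (C : Finset α) : ∑ b, (#(C.filter fun u => g u = b) : ℝ) = #C := by
  rw [card_eq_sum_card_fiberwise fun u _ => mem_univ (g u), Nat.cast_sum]

theorem sum_sum_le_mul_sq {ι : Type*} (S : Matrix ι ι ℝ) (s : Finset ι) {x : ι → ℝ} {m : ℝ}
    (hx : ∀ i ∈ s, 0 ≤ x i) (hS : ∀ i ∈ s, ∀ j ∈ s, S i j ≤ m) :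
    ∑ i ∈ s, ∑ j ∈ s, x i * S i j * x j ≤ m * (∑ i ∈ s, x i) ^ 2 := by
  rw [sq, sum_mul_sum, mul_sum]
  refine sum_le_sum fun i hi => ?_
  rw [mul_sum]
  refine sum_le_sum fun j hj => ?_
  nlinarith [mul_le_mul_of_nonneg_right (hS i hi j hj) (mul_nonneg (hx i hi) (hx j hj))]

section QuadraticForm

variable {ι : Type*} [Fintype ι] (S : Matrix ι ι ℝ)

theorem sum_sum_add_sum_sum_eq {x y τ : ι → ℝ} (h : ∀ j, x j + y j = τ j) :
    (∑ i, ∑ j, x i * S i j * x j) + ∑ i, ∑ j, x i * S i j * y j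
      = ∑ i, x i * ∑ j, S i j * τ j := by
  simp only [← sum_add_distrib, mul_sum, ← h]
  exact sum_congr rfl fun i _ => sum_congr rfl fun j _ => by ring

theorem sum_sum_eq_of_eq_zero {x : ι → ℝ} {k : ι} (hx : ∀ j, j ≠ k → x j = 0) :
    ∑ i, ∑ j, x i * S i j * x j = x k ^ 2 * S k k := by
  rw [Fintype.sum_eq_single k fun i hi => by simp [hx i hi],
    Fintype.sum_eq_single k fun j hj => by simp [hx j hj]]
  ring

theorem sum_sum_div_eq_of_eq_zero {x St : ι → ℝ} {k : ι} (hx : ∀ j, j ≠ k → x j = 0) :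
    (∑ i, ∑ j, x i * S i j * x j) / ∑ i, x i * St i = S k k * x k / St k := by
  rw [sum_sum_eq_of_eq_zero S hx, Fintype.sum_eq_single k fun i hi => by simp [hx i hi]]
  rcases eq_or_ne (x k) 0 with h | h
  · simp [h]
  · rw [show x k ^ 2 * S k k = x k * (S k k * x k) by ring, mul_div_mul_left _ _ h]

variable [DecidableEq ι]

theorem sum_sum_eq_split (hS : S.IsSymm) (x : ι → ℝ) (k : ι) :
    ∑ i, ∑ j, x i * S i j * x j
      = x k ^ 2 * S k k + 2 * x k * ∑ j ∈ univ.erase k, S k j * x j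
        + ∑ i ∈ univ.erase k, ∑ j ∈ univ.erase k, x i * S i j * x j := by
  have split : ∀ f : ι → ℝ, ∑ i, f i = f k + ∑ i ∈ univ.erase k, f i :=
    fun f => (add_sum_erase _ f (mem_univ k)).symm
  have cross : ∀ f : ι → ℝ, (∀ j, f j = x k * (S k j * x j)) →
      ∑ j ∈ univ.erase k, f j = x k * ∑ j ∈ univ.erase k, S k j * x j :=
    fun f hf => by rw [mul_sum]; exact sum_congr rfl fun j _ => hf j
  simp only [split, sum_add_distrib, hS.apply]
  rw [cross _ fun j => by ring, cross (fun j => x j * S k j * x k) fun j => by ring]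
  ring

end QuadraticForm

/-- `ratio_sub_le` with its denominators cleared, `M` standing for `2 s² / c + K μ / m`. -/
theorem ratio_gap_numerator_nonpos {a s σ m₁ m K μ c δ L Q T M : ℝ}
    (ha : 0 < a) (hs : 0 < s) (hσ : 0 < σ) (hm : 0 < m) (hm₁ : 0 ≤ m₁) (hK : 1 ≤ K)
    (hc : c = σ * μ - 2 * m₁ * s) (hcpos : 0 < c)
    (hM : M * (c * m) = 2 * s ^ 2 * m + K * μ * c)
    (hδ : 0 ≤ δ) (hδε : 2 * s * m * δ ≤ c * a)
    (hL : L ≤ m₁ * δ) (hQ : Q ≤ m * δ ^ 2) (hT : μ * δ ≤ T) :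
    M * (s * (2 * a * L + Q) - a * σ * T) + δ * s * (a * s + T) ≤ 0 := by
  have hcσμ : c ≤ σ * μ := by nlinarith [mul_nonneg hm₁ hs.le]
  have hμ : 0 < μ := pos_of_mul_pos_right (hcpos.trans_le hcσμ) hσ.le
  have hcm : 0 < c * m := mul_pos hcpos hm
  have hMpos : 0 < M := pos_of_mul_pos_left (hM ▸ by positivity) hcm.le
  have hcoef : δ * s ≤ M * a * σ := by
    refine le_of_mul_le_mul_right ?_ hcm
    have e : M * a * σ * (c * m) = (2 * s ^ 2 * m + K * μ * c) * a * σ := by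
      rw [← hM]; ring
    rw [e]
    nlinarith [mul_le_mul_of_nonneg_right hδε hcpos.le,
      mul_le_mul_of_nonneg_right hcσμ (mul_pos hcpos ha).le,
      mul_le_mul_of_nonneg_right hK (by positivity : 0 ≤ μ * c * a * σ),
      (by positivity : 0 ≤ s ^ 2 * m * a * σ), (by positivity : 0 ≤ μ * c * a * σ)]
  -- the left side is affine in `T` with slope `δ s - M a σ ≤ 0`, so `T` may be replaced by `μ δ`
  have hbound : M * (s * (2 * a * L + Q) - a * σ * T) + δ * s * (a * s + T)
      ≤ δ * (M * (s * m * δ - a * c) + s * μ * δ + a * s ^ 2) := by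
    rw [hc]
    nlinarith [mul_le_mul_of_nonneg_left hL (by positivity : 0 ≤ 2 * M * s * a),
      mul_le_mul_of_nonneg_left hQ (by positivity : 0 ≤ M * s),
      mul_le_mul_of_nonneg_left hT (by linarith : 0 ≤ M * a * σ - δ * s)]
  have hbracket : M * (s * m * δ - a * c) + s * μ * δ + a * s ^ 2 ≤ 0 := by
    refine nonpos_of_mul_nonpos_left ?_ hcm
    have e : (M * (s * m * δ - a * c) + s * μ * δ + a * s ^ 2) * (c * m)
        = s ^ 2 * m * (2 * s * m * δ - c * a)
          + μ * c * ((K + 1) * (s * m * δ) - K * (c * a)) := by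
      linear_combination (s * m * δ - a * c) * hM
    have h1 : s ^ 2 * m * (2 * s * m * δ - c * a) ≤ 0 :=
      mul_nonpos_of_nonneg_of_nonpos (by positivity) (by linarith)
    have h2 : μ * c * ((K + 1) * (s * m * δ) - K * (c * a)) ≤ 0 :=
      mul_nonpos_of_nonneg_of_nonpos (by positivity) (by
        nlinarith [mul_le_mul_of_nonneg_left hδε (by linarith : 0 ≤ K + 1),
          mul_le_mul_of_nonneg_right hK (mul_pos hcpos ha).le])
    linarith
  linarith [mul_nonpos_of_nonneg_of_nonpos hδ hbracket]

/-- In the application `a = τ₁`, `s = S̃₁`, `σ = S₁₁`, `μ = min S̃ᵢ`, `m₁ = max S₁ⱼ`,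
`m = max Sᵢⱼ`, and `L`, `Q`, `T` are the cross, off-block quadratic and off-block linear terms. -/
theorem ratio_sub_le {a s σ m₁ m K μ c δ L Q T : ℝ}
    (ha : 0 < a) (hs : 0 < s) (hσ : 0 < σ) (hm : 0 < m) (hm₁ : 0 ≤ m₁) (hK : 1 ≤ K)
    (hc : c = σ * μ - 2 * m₁ * s) (hcpos : 0 < c)
    (hδ : 0 ≤ δ) (hδε : 2 * s * m * δ ≤ c * a)
    (hL : L ≤ m₁ * δ) (hQ : Q ≤ m * δ ^ 2) (hT : μ * δ ≤ T) :
    (a ^ 2 * σ + 2 * a * L + Q) / (a * s + T) - σ * a / s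
      ≤ -(2 * s ^ 2 / c + K * μ / m)⁻¹ * δ := by
  set M := 2 * s ^ 2 / c + K * μ / m with hMdef
  have hM : M * (c * m) = 2 * s ^ 2 * m + K * μ * c := by rw [hMdef]; field_simp
  have key := ratio_gap_numerator_nonpos ha hs hσ hm hm₁ hK hc hcpos hM hδ hδε hL hQ hT
  have hμ : 0 < μ := by nlinarith [mul_nonneg hm₁ hs.le]
  have hMpos : 0 < M := by positivity
  have hD : 0 < a * s + T := by nlinarith [mul_pos ha hs]
  rw [← sub_nonpos]
  have e : (a ^ 2 * σ + 2 * a * L + Q) / (a * s + T) - σ * a / s - -M⁻¹ * δ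
      = (M * (s * (2 * a * L + Q) - a * σ * T) + δ * s * (a * s + T))
          / (M * (a * s + T) * s) := by
    field_simp
    ring
  rw [e]
  exact div_nonpos_of_nonpos_of_nonneg key (by positivity)

theorem quadratic_ratio_sub_le {ι : Type*} [Fintype ι] [DecidableEq ι] [Nontrivial ι]
    {S : Matrix ι ι ℝ} (hS : S.IsSymm) (hSpos : ∀ i j, 0 < S i j)
    {τ x St : ι → ℝ} {k : ι} (hτ : ∀ j, 0 ≤ τ j) (hτk : 0 < τ k)
    (hSt : ∀ i, St i = ∑ j, S i j * τ j) (hx : ∀ j, 0 ≤ x j) (hxk : x k = τ k)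
    {μ m₁ m c : ℝ} (hμ : ∀ i, i ≠ k → μ ≤ St i) (hm₁ : ∀ j, j ≠ k → S k j ≤ m₁)
    (hm : ∀ i j, i ≠ k → j ≠ k → S i j ≤ m) (hc : c = S k k * μ - 2 * m₁ * St k)
    (hcpos : 0 < c) (hδ : ∑ j ∈ univ.erase k, x j ≤ c * τ k / (2 * St k * m)) :
    (∑ i, ∑ j, x i * S i j * x j) / (∑ i, x i * St i) - S k k * τ k / St k
      ≤ -(2 * St k ^ 2 / c + Fintype.card ι * μ / m)⁻¹ * ∑ j ∈ univ.erase k, x j := by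
  obtain ⟨j, hj⟩ := exists_ne k
  have hs : 0 < St k := by
    rw [hSt]
    exact sum_pos' (fun j _ => mul_nonneg (hSpos k j).le (hτ j))
      ⟨k, mem_univ k, mul_pos (hSpos k k) hτk⟩
  have hmpos : 0 < m := (hSpos j j).trans_le (hm j j hj hj)
  rw [le_div_iff₀ (by positivity), mul_comm] at hδ
  have hL : ∑ j ∈ univ.erase k, S k j * x j ≤ m₁ * ∑ j ∈ univ.erase k, x j := by
    rw [mul_sum]
    exact sum_le_sum fun j hj => mul_le_mul_of_nonneg_right (hm₁ j (ne_of_mem_erase hj)) (hx j)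
  have hT : μ * ∑ j ∈ univ.erase k, x j ≤ ∑ j ∈ univ.erase k, x j * St j := by
    rw [mul_sum]
    exact sum_le_sum fun j hj => by
      rw [mul_comm]; exact mul_le_mul_of_nonneg_left (hμ j (ne_of_mem_erase hj)) (hx j)
  have hQ := sum_sum_le_mul_sq S (univ.erase k) (fun i _ => hx i)
    fun i hi j hj => hm i j (ne_of_mem_erase hi) (ne_of_mem_erase hj)
  rw [sum_sum_eq_split S hS x k, ← add_sum_erase univ (fun i => x i * St i) (mem_univ k), hxk]
  exact ratio_sub_le hτk hs (hSpos k k) hmpos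
    ((hSpos k j).le.trans (hm₁ j hj)) (Nat.one_le_cast.mpr Fintype.card_pos) hc hcpos
    (sum_nonneg fun j _ => hx j) hδ hL hQ hT

theorem stmt_5_general (N K : ℕ) (hN : 1 ≤ N) (hK : 2 ≤ K)
    (g : Fin N → Fin K)
    (k₁ : Fin K)
    (S : Matrix (Fin K) (Fin K) ℝ) (hSsymm : S.IsSymm) (hSpos : ∀ i j, 0 < S i j)
    (τ : Fin K → ℝ)
    (hτ : ∀ k, τ k = ((Finset.univ.filter fun u => g u = k).card : ℝ) / N)
    (St : Fin K → ℝ) (hSt : ∀ i, St i = ∑ j, S i j * τ j)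
    (I₁ : Finset (Fin N)) (hI₁ : I₁ = Finset.univ.filter fun u => g u = k₁)
    (hI₁ne : I₁.Nonempty)
    (R : Finset (Fin N) → Fin 2 → Fin K → ℝ)
    (hR0 : ∀ C b, R C 0 b = ((C.filter fun u => g u = b).card : ℝ) / N)
    (hR1 : ∀ C b, R C 1 b = (((Cᶜ).filter fun u => g u = b).card : ℝ) / N)
    (G : Finset (Fin N) → ℝ)
    (hG : ∀ C, G C = (∑ i, ∑ j, R C 0 i * S i j * R C 0 j) /
        ((∑ i, ∑ j, R C 0 i * S i j * R C 0 j) + ∑ i, ∑ j, R C 0 i * S i j * R C 1 j))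
    (minSt : ℝ) (hminSt : ∀ i : Fin K, i ≠ k₁ → minSt ≤ St i)
    (maxS1 : ℝ) (hmaxS1 : ∀ j : Fin K, j ≠ k₁ → S k₁ j ≤ maxS1)
    (maxS : ℝ) (hmaxS : ∀ i j : Fin K, i ≠ k₁ → j ≠ k₁ → S i j ≤ maxS)
    (c : ℝ) (hc : c = S k₁ k₁ * minSt - 2 * maxS1 * St k₁) (hcpos : 0 < c)
    (ε : ℝ) (hε : ε = c * τ k₁ / (2 * St k₁ * maxS)) :
    ∀ C : Finset (Fin N), I₁ ⊆ C →
      (C.card : ℝ) - (I₁.card : ℝ) ≤ ε * N →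
      G C - G I₁ ≤
        -(2 * St k₁ ^ 2 / c + K * minSt / maxS)⁻¹ *
          ((C.card : ℝ) - (I₁.card : ℝ)) / N := by
  intro C hsub hcard
  have hNpos : (0 : ℝ) < N := by exact_mod_cast hN
  have hτ₁ : τ k₁ = #I₁ / N := by rw [hτ, hI₁]
  have hτ₁pos : 0 < τ k₁ := by
    rw [hτ₁]; exact div_pos (by exact_mod_cast hI₁ne.card_pos) hNpos
  have hGeq : ∀ C, G C = (∑ i, ∑ j, R C 0 i * S i j * R C 0 j) / ∑ i, R C 0 i * St i := by
    intro C
    rw [hG, sum_sum_add_sum_sum_eq S (τ := τ) fun b => ?_]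
    · simp only [hSt]
    · rw [hR0, hR1, hτ, ← add_div, ← Nat.cast_add, card_filter_add_card_filter_compl]
  have hRk : ∀ C, I₁ ⊆ C → R C 0 k₁ = τ k₁ := fun C hC => by
    rw [hR0, hτ, filter_eq_filter_univ_of_subset (hI₁ ▸ hC)]
  have hGI : G I₁ = S k₁ k₁ * τ k₁ / St k₁ := by
    have hR : ∀ b, b ≠ k₁ → R I₁ 0 b = 0 := fun b hb => by
      rw [hR0, hI₁, filter_filter, filter_false_of_mem, card_empty, Nat.cast_zero, zero_div]
      exact fun u _ hu => hb (hu.2.symm.trans hu.1)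
    rw [hGeq, sum_sum_div_eq_of_eq_zero S hR, hRk I₁ subset_rfl]
  have hxk := hRk C hsub
  have hδ : ∑ b ∈ univ.erase k₁, R C 0 b = (#C - #I₁) / N := by
    rw [sum_erase_eq_sub (mem_univ k₁), hxk, hτ₁, sub_div]
    simp only [hR0, ← sum_div, sum_card_filter_fiber_eq_card]
  have hδε : ∑ b ∈ univ.erase k₁, R C 0 b ≤ ε := by
    rwa [hδ, div_le_iff₀ hNpos]
  have : Nontrivial (Fin K) := Fin.nontrivial_iff_two_le.mpr hK
  have key := quadratic_ratio_sub_le hSsymm hSpos (fun k => by rw [hτ]; positivity) hτ₁pos hSt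
    (fun b => by rw [hR0]; positivity) hxk hminSt hmaxS1 hmaxS hc hcpos (hε ▸ hδε)
  rw [hGeq, mul_div_assoc, ← hδ, hGI]
  simpa using key

theorem stmt_5 (N K : ℕ) (hN : 1 ≤ N) (hK : 2 ≤ K)
    (g : Fin N → Fin K)
    (k₁ : Fin K) (hk₁ : (k₁ : ℕ) = 0)
    (S : Matrix (Fin K) (Fin K) ℝ) (hSsymm : S.IsSymm) (hSpos : ∀ i j, 0 < S i j)
    (τ : Fin K → ℝ)
    (hτ : ∀ k, τ k = ((Finset.univ.filter fun u => g u = k).card : ℝ) / N)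
    (St : Fin K → ℝ) (hSt : ∀ i, St i = ∑ j, S i j * τ j)
    (I₁ : Finset (Fin N)) (hI₁ : I₁ = Finset.univ.filter fun u => g u = k₁)
    (hI₁ne : I₁.Nonempty)
    (R : Finset (Fin N) → Fin 2 → Fin K → ℝ)
    (hR0 : ∀ C b, R C 0 b = ((C.filter fun u => g u = b).card : ℝ) / N)
    (hR1 : ∀ C b, R C 1 b = (((Cᶜ).filter fun u => g u = b).card : ℝ) / N)
    (G : Finset (Fin N) → ℝ)
    (hG : ∀ C, G C = (∑ i, ∑ j, R C 0 i * S i j * R C 0 j) /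
        ((∑ i, ∑ j, R C 0 i * S i j * R C 0 j) + ∑ i, ∑ j, R C 0 i * S i j * R C 1 j))
    (minSt : ℝ) (hminSt : ∀ i : Fin K, i ≠ k₁ → minSt ≤ St i)
    (hminSt' : ∃ i : Fin K, i ≠ k₁ ∧ minSt = St i)
    (maxS1 : ℝ) (hmaxS1 : ∀ j : Fin K, j ≠ k₁ → S k₁ j ≤ maxS1)
    (hmaxS1' : ∃ j : Fin K, j ≠ k₁ ∧ maxS1 = S k₁ j)
    (maxS : ℝ) (hmaxS : ∀ i j : Fin K, i ≠ k₁ → j ≠ k₁ → S i j ≤ maxS)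
    (hmaxS' : ∃ i j : Fin K, i ≠ k₁ ∧ j ≠ k₁ ∧ maxS = S i j)
    (c : ℝ) (hc : c = S k₁ k₁ * minSt - 2 * maxS1 * St k₁) (hcpos : 0 < c)
    (ε : ℝ) (hε : ε = c * τ k₁ / (2 * St k₁ * maxS)) :
    ∀ C : Finset (Fin N), I₁ ⊆ C →
      (C.card : ℝ) - (I₁.card : ℝ) ≤ ε * N →
      G C - G I₁ ≤
        -(2 * St k₁ ^ 2 / c + K * minSt / maxS)⁻¹ *
          ((C.card : ℝ) - (I₁.card : ℝ)) / N :=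
  stmt_5_general N K hN hK g k₁ S hSsymm hSpos τ hτ St hSt I₁ hI₁ hI₁ne R hR0 hR1 G hG minSt hminSt
    maxS1 hmaxS1 maxS hmaxS c hc hcpos ε hε
end

section
/- (Lemma 2, explicit form.) Assume c := S_{11}·min_{2≤i≤K} S̃_{i·} − 2·max_{2≤j≤K} S_{1j}·S̃_{1·} > 0. Set ε := c·τ_1 / (2·U_θ·S̃_{1·}·max_{2≤i,j≤K} S_{ij}) and c' := L_θ · min{ S_{11}/S̃_{1·}, 1/( 2·S̃_{1·}²/c + K·min_{2≤i≤K} S̃_{i·} / max_{2≤i,j≤K} S_{ij} ) }. Then for every nonempty subset C ⊆ {1,…,N} such that (C ⊆ I_1 or I_1 ⊆ C) and |C| ≤ n_1 + ε·N, one has G̃(C) − G̃(I_1) ≤ −c' · | |C| − n_1 | / N. -/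
/-!
Since the two rows of `R̃(C)` add up to `τ`, the objective depends only on the first row `x`:
`G̃(C) = xᵀ S x / xᵀ S̃`. For `C ⊆ I₁`, `x` lives on block 1, `G̃(C) = x₁ S₁₁ / S̃₁`, and the
mass lost from `I₁` is at least `L_θ (n₁ - |C|) / N`. For `I₁ ⊆ C`, `x = τ₁ e₁ + w` with `w ≥ 0`
off block 1, of total mass `t ∈ [L_θ, U_θ] · (|C| - n₁) / N`. Bounding `w ⬝ S₁.` by `max S₁ⱼ · t`,
`wᵀ S w` by `max Sᵢⱼ · t²` and `w ⬝ S̃` from below by `min S̃ᵢ · t`, the definition of `c` turns the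
numerator of `G̃(C) - G̃(I₁)` into at most `-τ₁ c t + max Sᵢⱼ S̃₁ t² - τ₁ S₁₁ v`, where
`v = w ⬝ S̃ - min S̃ᵢ · t ≥ 0`; the cap `|C| ≤ n₁ + εN` is exactly what makes the quadratic term at
most `τ₁ c t / 2`, and the choice of `c'` makes what is left beat `c' (|C| - n₁) / N`.
-/

open Finset Matrix

section DotProduct

variable {ι : Type*} [Fintype ι]

lemma sum_sum_mul_mul_eq_dotProduct_mulVec (S : Matrix ι ι ℝ) (x y : ι → ℝ) :
    ∑ i, ∑ j, x i * S i j * y j = x ⬝ᵥ S *ᵥ y := by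
  simp only [dotProduct, mulVec, Finset.mul_sum, mul_assoc]

lemma dotProduct_le_mul_sum_of_apply_eq_zero {w a : ι → ℝ} {k : ι} {M : ℝ}
    (hw : 0 ≤ w) (hwk : w k = 0) (ha : ∀ j, j ≠ k → a j ≤ M) :
    w ⬝ᵥ a ≤ M * ∑ j, w j := by
  rw [dotProduct, Finset.mul_sum]
  refine sum_le_sum fun j _ => ?_
  rcases eq_or_ne j k with rfl | hj
  · simp [hwk]
  · rw [mul_comm M]
    exact mul_le_mul_of_nonneg_left (ha j hj) (hw j)

lemma mul_sum_le_dotProduct_of_apply_eq_zero {w a : ι → ℝ} {k : ι} {m : ℝ}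
    (hw : 0 ≤ w) (hwk : w k = 0) (ha : ∀ j, j ≠ k → m ≤ a j) :
    m * ∑ j, w j ≤ w ⬝ᵥ a := by
  have := dotProduct_le_mul_sum_of_apply_eq_zero (a := -a) hw hwk fun j hj => neg_le_neg (ha j hj)
  rw [dotProduct_neg] at this
  linarith

lemma mulVec_pos {S : Matrix ι ι ℝ} {τ : ι → ℝ} {k : ι} (hS : ∀ i j, 0 < S i j) (hτ : 0 ≤ τ)
    (hτk : 0 < τ k) (i : ι) : 0 < (S *ᵥ τ) i :=
  (mul_pos (hS i k) hτk).trans_le <|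
    single_le_sum (f := fun j => S i j * τ j) (fun j _ => mul_nonneg (hS i j).le (hτ j)) (mem_univ k)

lemma dotProduct_mulVec_self_le_mul_sq {S : Matrix ι ι ℝ} {w : ι → ℝ} {k : ι} {M : ℝ}
    (hw : 0 ≤ w) (hwk : w k = 0) (hS : ∀ i j, i ≠ k → j ≠ k → S i j ≤ M) :
    w ⬝ᵥ S *ᵥ w ≤ M * (∑ j, w j) ^ 2 := by
  have hrow : ∀ i, i ≠ k → (S *ᵥ w) i ≤ M * ∑ j, w j := fun i hi => by
    rw [mulVec, dotProduct_comm]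
    exact dotProduct_le_mul_sum_of_apply_eq_zero hw hwk (hS i · hi)
  calc w ⬝ᵥ S *ᵥ w ≤ (M * ∑ j, w j) * ∑ j, w j :=
        dotProduct_le_mul_sum_of_apply_eq_zero hw hwk hrow
    _ = M * (∑ j, w j) ^ 2 := by ring

variable [DecidableEq ι]

lemma single_dotProduct_mulVec_single (S : Matrix ι ι ℝ) (k : ι) (a : ℝ) :
    Pi.single k a ⬝ᵥ S *ᵥ Pi.single k a = a ^ 2 * S k k := by
  simp only [mulVec_single, op_smul_eq_smul, dotProduct_smul, single_dotProduct, col_apply,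
    smul_eq_mul]
  ring

lemma single_add_dotProduct_mulVec_single_add {S : Matrix ι ι ℝ} (hS : S.IsSymm) (k : ι) (a : ℝ)
    (w : ι → ℝ) :
    (Pi.single k a + w) ⬝ᵥ S *ᵥ (Pi.single k a + w)
      = a ^ 2 * S k k + 2 * a * (w ⬝ᵥ S k) + w ⬝ᵥ S *ᵥ w := by
  have hcol : S.col k = S k := funext fun i => hS.apply k i
  have hrow : (S *ᵥ w) k = w ⬝ᵥ S k := dotProduct_comm _ _
  simp only [add_dotProduct, mulVec_add, dotProduct_add, single_dotProduct, mulVec_single,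
    hcol, hrow, op_smul_eq_smul, dotProduct_smul, smul_eq_mul]
  ring

end DotProduct

lemma ratio_sub_le_neg_of_bounds {a s σ μ M₁ M c m t u Q₂ Q₃ : ℝ}
    (ha : 0 < a) (hs : 0 < s) (hσ : 0 < σ) (hμ : 0 < μ) (ht : 0 ≤ t) (hM₁ : 0 ≤ M₁)
    (hQ₂ : Q₂ ≤ M₁ * t) (hQ₃ : Q₃ ≤ M * t ^ 2) (hu : μ * t ≤ u)
    (hM : 0 < M) (hc : c = s * μ - 2 * M₁ * σ) (ht_cap : t ≤ c * a / (2 * σ * M))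
    (hm : m * σ * (a * σ + μ * t) ≤ a * c * t / 2) :
    (a ^ 2 * s + 2 * a * Q₂ + Q₃) / (a * σ + u) - a * s / σ ≤ -m := by
  have htc : M * σ * t ≤ c * a / 2 := by
    rw [le_div_iff₀ (by positivity)] at ht_cap
    linarith
  have hden : 0 < a * σ + μ * t := by positivity
  subst hc
  -- `c ≤ s μ`, so `hm` already forces `m σ ≤ a s`.
  have hmσ : m * σ ≤ a * s := by
    refine le_of_mul_le_mul_right ?_ hden
    nlinarith [mul_nonneg (mul_nonneg ha.le ht) (mul_nonneg hM₁ hσ.le),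
      mul_pos (mul_pos ha hs) (mul_pos ha hσ), mul_nonneg (mul_pos (mul_pos ha hs) hμ).le ht]
  rw [div_sub_div _ _ (by linarith) hσ.ne', div_le_iff₀ (by nlinarith)]
  nlinarith [mul_le_mul_of_nonneg_left hQ₂ (by positivity : 0 ≤ 2 * a * σ),
    mul_le_mul_of_nonneg_left hQ₃ hσ.le, mul_le_mul_of_nonneg_right htc ht,
    mul_le_mul_of_nonneg_right hmσ (sub_nonneg.2 hu)]

lemma mul_le_half_of_le_cap {a σ μ M c t r L K m : ℝ} (ha : 0 < a) (hσ : 0 < σ) (hμ : 0 < μ)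
    (hM : 0 < M) (hc : 0 < c) (hK : 1 ≤ K) (hr : 0 ≤ r) (hm : 0 ≤ m)
    (ht : t ≤ c * a / (2 * σ * M)) (hLt : L * r ≤ t)
    (hmL : m ≤ L / (2 * σ ^ 2 / c + K * μ / M)) :
    m * r * σ * (a * σ + μ * t) ≤ a * c * t / 2 := by
  have hD : 0 < 2 * σ ^ 2 / c + K * μ / M := by positivity
  have hmD : m * (2 * σ ^ 2 / c + μ / M) ≤ L := by
    rw [le_div_iff₀ hD] at hmL
    refine le_trans (mul_le_mul_of_nonneg_left ?_ hm) hmL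
    gcongr
    exact le_mul_of_one_le_left hμ.le hK
  calc m * r * σ * (a * σ + μ * t) ≤ m * r * σ * (a * σ + μ * (c * a / (2 * σ * M))) := by
        gcongr
    _ = m * (2 * σ ^ 2 / c + μ / M) * r * (a * c / 2) := by
        field_simp
    _ ≤ L * r * (a * c / 2) := by gcongr
    _ ≤ a * c * t / 2 := by nlinarith [mul_pos ha hc]

section Objective

variable {ι : Type*} [Fintype ι]

noncomputable def objective (S : Matrix ι ι ℝ) (St x : ι → ℝ) : ℝ :=
  x ⬝ᵥ S *ᵥ x / (x ⬝ᵥ St)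

lemma div_add_eq_objective {S : Matrix ι ι ℝ} {x y τ : ι → ℝ} (h : x + y = τ) :
    (∑ i, ∑ j, x i * S i j * x j) /
        ((∑ i, ∑ j, x i * S i j * x j) + ∑ i, ∑ j, x i * S i j * y j)
      = objective S (S *ᵥ τ) x := by
  simp only [objective, sum_sum_mul_mul_eq_dotProduct_mulVec, ← dotProduct_add, ← mulVec_add, h]

variable {S : Matrix ι ι ℝ} {St : ι → ℝ}

lemma objective_smul {r : ℝ} (hr : r ≠ 0) (x : ι → ℝ) :
    objective S St (r • x) = r * objective S St x := by
  simp only [objective, mulVec_smul, dotProduct_smul, smul_dotProduct, smul_eq_mul]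
  rw [mul_div_mul_left _ _ hr, mul_div_assoc]

variable [DecidableEq ι] {k : ι}

lemma objective_single {a : ℝ} (ha : a ≠ 0) :
    objective S St (Pi.single k a) = a * S k k / St k := by
  rw [objective, single_dotProduct_mulVec_single, single_dotProduct, sq, mul_assoc,
    mul_div_mul_left _ _ ha]

lemma objective_single_add_sub_le (hS : S.IsSymm) {a μ M₁ M c m : ℝ} {w : ι → ℝ}
    (ha : 0 < a) (hSkk : 0 < S k k) (hStk : 0 < St k) (hμ : 0 < μ) (hM₁ : 0 ≤ M₁)
    (hw : 0 ≤ w) (hwk : w k = 0) (hμSt : ∀ i, i ≠ k → μ ≤ St i)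
    (hSk : ∀ j, j ≠ k → S k j ≤ M₁) (hSM : ∀ i j, i ≠ k → j ≠ k → S i j ≤ M)
    (hM : 0 < M) (hc : c = S k k * μ - 2 * M₁ * St k)
    (ht_cap : ∑ j, w j ≤ c * a / (2 * St k * M))
    (hm : m * St k * (a * St k + μ * ∑ j, w j) ≤ a * c * (∑ j, w j) / 2) :
    objective S St (Pi.single k a + w) - objective S St (Pi.single k a) ≤ -m := by
  rw [objective_single ha.ne', objective, single_add_dotProduct_mulVec_single_add hS,
    add_dotProduct, single_dotProduct]
  exact ratio_sub_le_neg_of_bounds ha hSkk hStk hμ (sum_nonneg fun j _ => hw j) hM₁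
    (dotProduct_le_mul_sum_of_apply_eq_zero hw hwk hSk)
    (dotProduct_mulVec_self_le_mul_sq hw hwk hSM)
    (mul_sum_le_dotProduct_of_apply_eq_zero hw hwk hμSt) hM hc ht_cap hm

end Objective

section BlockMass

variable {α ι : Type*} [DecidableEq ι]

def blockMass (g : α → ι) (θ : α → ℝ) (C : Finset α) (b : ι) : ℝ :=
  ∑ u ∈ C with g u = b, θ u

variable {g : α → ι} {θ : α → ℝ}

lemma blockMass_nonneg (hθ : ∀ u, 0 ≤ θ u) (C : Finset α) : 0 ≤ blockMass g θ C :=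
  fun _ => sum_nonneg fun u _ => hθ u

lemma blockMass_apply_eq_zero {C : Finset α} {b : ι} (hC : ∀ u ∈ C, g u ≠ b) :
    blockMass g θ C b = 0 := by
  rw [blockMass, filter_false_of_mem hC, sum_empty]

lemma blockMass_eq_single {C : Finset α} {k : ι} (hC : ∀ u ∈ C, g u = k) :
    blockMass g θ C = Pi.single k (∑ u ∈ C, θ u) := by
  ext b
  rcases eq_or_ne b k with rfl | hb
  · rw [blockMass, filter_true_of_mem hC, Pi.single_eq_same]
  · rw [Pi.single_eq_of_ne hb, blockMass_apply_eq_zero fun u hu => (hC u hu).trans_ne hb.symm]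

lemma sum_blockMass [Fintype ι] (C : Finset α) : ∑ b, blockMass g θ C b = ∑ u ∈ C, θ u :=
  sum_fiberwise C g θ

lemma div_eq_inv_smul_blockMass (C : Finset α) (N : ℝ) :
    (fun b => (∑ u ∈ C with g u = b, θ u) / N) = N⁻¹ • blockMass g θ C :=
  funext fun _ => (inv_mul_eq_div _ _).symm

variable [DecidableEq α]

lemma blockMass_sdiff_add {C D : Finset α} (h : D ⊆ C) :
    blockMass g θ (C \ D) + blockMass g θ D = blockMass g θ C := by
  ext b
  simp only [Pi.add_apply, blockMass, sum_filter]
  exact sum_sdiff h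

variable [Fintype α]

lemma blockMass_add_blockMass_compl (C : Finset α) :
    blockMass g θ C + blockMass g θ Cᶜ = blockMass g θ univ := by
  ext b
  simp only [Pi.add_apply, blockMass, sum_filter]
  exact sum_add_sum_compl C _

end BlockMass

section Communities

variable {α ι : Type*} [Fintype α] [DecidableEq α] [Fintype ι] [DecidableEq ι]
  {g : α → ι} {θ : α → ℝ} {S : Matrix ι ι ℝ} {St : ι → ℝ} {C : Finset α} {k : ι}

lemma div_add_eq_inv_mul_objective {N : ℝ} (hN : N ≠ 0)
    (hSt : S *ᵥ (N⁻¹ • blockMass g θ univ) = St) (D : Finset α) {x y : ι → ℝ}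
    (hx : ∀ b, x b = (∑ u ∈ D with g u = b, θ u) / N)
    (hy : ∀ b, y b = (∑ u ∈ Dᶜ with g u = b, θ u) / N) :
    (∑ i, ∑ j, x i * S i j * x j) /
        ((∑ i, ∑ j, x i * S i j * x j) + ∑ i, ∑ j, x i * S i j * y j)
      = N⁻¹ * objective S St (blockMass g θ D) := by
  rw [funext hx, funext hy, div_eq_inv_smul_blockMass, div_eq_inv_smul_blockMass,
    div_add_eq_objective (by rw [← smul_add, blockMass_add_blockMass_compl]), hSt,
    objective_smul (inv_ne_zero hN)]

lemma objective_blockMass_sub_le_of_subset {L : ℝ} (hC : C.Nonempty) (hCk : C ⊆ ({u | g u = k} : Finset α))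
    (hL : 0 < L) (hθ : ∀ u, L ≤ θ u) (hSkk : 0 ≤ S k k) (hStk : 0 ≤ St k) :
    objective S St (blockMass g θ C) - objective S St (blockMass g θ {u | g u = k})
      ≤ -(L * (S k k / St k)) * (#{u | g u = k} - #C) := by
  have hgk : ∀ u ∈ ({u | g u = k} : Finset α), g u = k := fun u hu => (mem_filter.1 hu).2
  have hpos : ∀ D : Finset α, D.Nonempty → 0 < ∑ u ∈ D, θ u := fun D hD =>
    sum_pos (fun u _ => hL.trans_le (hθ u)) hD
  have hgap : L * (#{u | g u = k} - #C) ≤ ∑ u with g u = k, θ u - ∑ u ∈ C, θ u := by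
    rw [← sum_sdiff hCk, add_sub_cancel_right, ← Nat.cast_sub (card_le_card hCk),
      ← card_sdiff_of_subset hCk, mul_comm]
    simpa using card_nsmul_le_sum _ θ L fun u _ => hθ u
  rw [blockMass_eq_single fun u hu => hgk u (hCk hu), blockMass_eq_single hgk,
    objective_single (hpos C hC).ne', objective_single (hpos _ (hC.mono hCk)).ne',
    mul_div_assoc, mul_div_assoc]
  nlinarith [mul_le_mul_of_nonneg_right hgap (div_nonneg hSkk hStk)]

lemma objective_blockMass_sub_le_of_superset (hS : S.IsSymm) {L U μ M₁ M c m K : ℝ}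
    (hkC : ({u | g u = k} : Finset α) ⊆ C) (hk : ({u | g u = k} : Finset α).Nonempty)
    (hL : 0 < L) (hθ : ∀ u, L ≤ θ u ∧ θ u ≤ U)
    (hSkk : 0 < S k k) (hStk : 0 < St k) (hμ : 0 < μ) (hM₁ : 0 ≤ M₁) (hM : 0 < M) (hK : 1 ≤ K)
    (hμSt : ∀ i, i ≠ k → μ ≤ St i) (hSk : ∀ j, j ≠ k → S k j ≤ M₁)
    (hSM : ∀ i j, i ≠ k → j ≠ k → S i j ≤ M)
    (hc : c = S k k * μ - 2 * M₁ * St k) (hcpos : 0 < c)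
    (hcap : U * (#C - #{u | g u = k}) ≤ c * (∑ u with g u = k, θ u) / (2 * St k * M))
    (hm : 0 ≤ m) (hmL : m ≤ L / (2 * St k ^ 2 / c + K * μ / M)) :
    objective S St (blockMass g θ C) - objective S St (blockMass g θ {u | g u = k})
      ≤ -m * (#C - #{u | g u = k}) := by
  set I : Finset α := {u | g u = k}
  set w := blockMass g θ (C \ I)
  have hgk : ∀ u ∈ I, g u = k := fun u hu => (mem_filter.1 hu).2
  have ha : 0 < ∑ u ∈ I, θ u := sum_pos (fun u _ => hL.trans_le (hθ u).1) hk
  have hr : (0 : ℝ) ≤ #C - #I := sub_nonneg.2 (by exact_mod_cast card_le_card hkC)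
  have hcard : (#(C \ I) : ℝ) = #C - #I := by
    rw [card_sdiff_of_subset hkC, Nat.cast_sub (card_le_card hkC)]
  have htL : L * (#C - #I) ≤ ∑ j, w j := by
    rw [sum_blockMass, ← hcard, mul_comm]
    simpa using card_nsmul_le_sum _ θ L fun u _ => (hθ u).1
  have htU : ∑ j, w j ≤ U * (#C - #I) := by
    rw [sum_blockMass, ← hcard, mul_comm]
    simpa using sum_le_card_nsmul _ θ U fun u _ => (hθ u).2
  have hwk : w k = 0 := blockMass_apply_eq_zero fun u hu hgu =>
    (mem_sdiff.1 hu).2 (mem_filter.2 ⟨mem_univ u, hgu⟩)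
  rw [← blockMass_sdiff_add hkC, blockMass_eq_single hgk, add_comm, neg_mul]
  exact objective_single_add_sub_le hS ha hSkk hStk hμ hM₁
    (blockMass_nonneg (fun u => hL.le.trans (hθ u).1) _) hwk hμSt hSk hSM hM hc (htU.trans hcap)
    (mul_le_half_of_le_cap ha hStk hμ hM hcpos hK hr hm (htU.trans hcap) htL hmL)

end Communities

theorem stmt_7_general (N K : ℕ) (hN : 1 ≤ N) (hK : 2 ≤ K)
    (g : Fin N → Fin K)
    (k₁ : Fin K)
    (S : Matrix (Fin K) (Fin K) ℝ) (hSsymm : S.IsSymm) (hSpos : ∀ i j, 0 < S i j)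
    (τ : Fin K → ℝ)
    (hτ : ∀ k, τ k = ((Finset.univ.filter fun u => g u = k).card : ℝ) / N)
    (St : Fin K → ℝ) (hSt : ∀ i, St i = ∑ j, S i j * τ j)
    (I₁ : Finset (Fin N)) (hI₁ : I₁ = Finset.univ.filter fun u => g u = k₁)
    (hI₁ne : I₁.Nonempty)
    (θ : Fin N → ℝ) (Lθ Uθ : ℝ) (hLθ : 0 < Lθ)
    (hθ : ∀ u, Lθ ≤ θ u ∧ θ u ≤ Uθ)
    (hident : ∀ k : Fin K, ∑ u ∈ Finset.univ.filter (fun u => g u = k), θ u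
        = ((Finset.univ.filter fun u => g u = k).card : ℝ))
    (Rt : Finset (Fin N) → Fin 2 → Fin K → ℝ)
    (hRt0 : ∀ C b, Rt C 0 b = (∑ u ∈ C.filter fun u => g u = b, θ u) / N)
    (hRt1 : ∀ C b, Rt C 1 b = (∑ u ∈ (Cᶜ).filter fun u => g u = b, θ u) / N)
    (Gt : Finset (Fin N) → ℝ)
    (hGt : ∀ C, Gt C = (∑ i, ∑ j, Rt C 0 i * S i j * Rt C 0 j) /
        ((∑ i, ∑ j, Rt C 0 i * S i j * Rt C 0 j) + ∑ i, ∑ j, Rt C 0 i * S i j * Rt C 1 j))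
    (minSt : ℝ) (hminSt : ∀ i : Fin K, i ≠ k₁ → minSt ≤ St i)
    (hminSt' : ∃ i : Fin K, i ≠ k₁ ∧ minSt = St i)
    (maxS1 : ℝ) (hmaxS1 : ∀ j : Fin K, j ≠ k₁ → S k₁ j ≤ maxS1)
    (hmaxS1' : ∃ j : Fin K, j ≠ k₁ ∧ maxS1 = S k₁ j)
    (maxS : ℝ) (hmaxS : ∀ i j : Fin K, i ≠ k₁ → j ≠ k₁ → S i j ≤ maxS)
    (hmaxS' : ∃ i j : Fin K, i ≠ k₁ ∧ j ≠ k₁ ∧ maxS = S i j)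
    (c : ℝ) (hc : c = S k₁ k₁ * minSt - 2 * maxS1 * St k₁) (hcpos : 0 < c)
    (ε : ℝ) (hε : ε = c * τ k₁ / (2 * Uθ * St k₁ * maxS))
    (c' : ℝ)
    (hc' : c' = Lθ * min (S k₁ k₁ / St k₁)
        (1 / (2 * St k₁ ^ 2 / c + K * minSt / maxS))) :
    ∀ C : Finset (Fin N), C.Nonempty → (C ⊆ I₁ ∨ I₁ ⊆ C) →
      (C.card : ℝ) ≤ (I₁.card : ℝ) + ε * N →
      Gt C - Gt I₁ ≤ -c' * |(C.card : ℝ) - (I₁.card : ℝ)| / N := by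
  intro C hCne hsub hcard
  subst hI₁
  have hN0 : (0 : ℝ) < N := by exact_mod_cast hN
  have hτN : τ = (N : ℝ)⁻¹ • blockMass g θ univ :=
    (funext fun b => by rw [hτ, ← hident]).trans (div_eq_inv_smul_blockMass _ _)
  have hSτ : S *ᵥ τ = St := funext fun i => (hSt i).symm
  have hG : ∀ D, Gt D = (N : ℝ)⁻¹ * objective S St (blockMass g θ D) := fun D => by
    rw [hGt, div_add_eq_inv_mul_objective hN0.ne' (hτN ▸ hSτ) D (hRt0 D) (hRt1 D)]
  have hτ₁ : 0 < τ k₁ := by rw [hτ]; exact div_pos (by exact_mod_cast hI₁ne.card_pos) hN0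
  have hStpos : ∀ i, 0 < St i := hSτ ▸ mulVec_pos hSpos (fun k => by rw [hτ]; positivity) hτ₁
  have hμ : 0 < minSt := by obtain ⟨i, -, rfl⟩ := hminSt'; exact hStpos i
  have hM : 0 < maxS := by obtain ⟨i, j, -, -, rfl⟩ := hmaxS'; exact hSpos i j
  have hM₁ : 0 ≤ maxS1 := by obtain ⟨j, -, rfl⟩ := hmaxS1'; exact (hSpos k₁ j).le
  rw [hG, hG, ← mul_sub, inv_mul_eq_div, div_le_div_iff_of_pos_right hN0]
  rcases hsub with hCI | hIC
  · have hc'le : c' ≤ Lθ * (S k₁ k₁ / St k₁) :=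
      hc' ▸ mul_le_mul_of_nonneg_left (min_le_left _ _) hLθ.le
    have hd : (#C : ℝ) ≤ #{u | g u = k₁} := by exact_mod_cast card_le_card hCI
    rw [abs_of_nonpos (sub_nonpos.2 hd), neg_sub]
    refine (objective_blockMass_sub_le_of_subset hCne hCI hLθ (fun u => (hθ u).1)
      (hSpos k₁ k₁).le (hStpos k₁).le).trans ?_
    nlinarith [mul_le_mul_of_nonneg_right hc'le (sub_nonneg.2 hd)]
  · have hc'0 : 0 ≤ c' := by
      have := hStpos k₁; have := hSpos k₁ k₁
      rw [hc']; positivity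
    have hc'le : c' ≤ Lθ / (2 * St k₁ ^ 2 / c + K * minSt / maxS) := by
      rw [hc', ← mul_one_div Lθ]
      exact mul_le_mul_of_nonneg_left (min_le_right _ _) hLθ.le
    have hcap : Uθ * (#C - #{u | g u = k₁}) ≤
        c * (∑ u with g u = k₁, θ u) / (2 * St k₁ * maxS) := by
      obtain ⟨u₀, -⟩ := hI₁ne
      have hU : 0 < Uθ := hLθ.trans_le ((hθ u₀).1.trans (hθ u₀).2)
      calc Uθ * (#C - #{u | g u = k₁}) ≤ Uθ * (ε * N) := by gcongr; linarith
        _ = c * (∑ u with g u = k₁, θ u) / (2 * St k₁ * maxS) := by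
          rw [hε, hident, hτ]
          field_simp
    rw [abs_of_nonneg (sub_nonneg.2 (by exact_mod_cast card_le_card hIC))]
    exact objective_blockMass_sub_le_of_superset hSsymm hIC hI₁ne hLθ hθ (hSpos k₁ k₁)
      (hStpos k₁) hμ hM₁ hM (by exact_mod_cast one_le_two.trans hK) hminSt hmaxS1 hmaxS hc hcpos
      hcap hc'0 hc'le

theorem stmt_7 (N K : ℕ) (hN : 1 ≤ N) (hK : 2 ≤ K)
    (g : Fin N → Fin K)
    (k₁ : Fin K) (hk₁ : (k₁ : ℕ) = 0)
    (S : Matrix (Fin K) (Fin K) ℝ) (hSsymm : S.IsSymm) (hSpos : ∀ i j, 0 < S i j)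
    (τ : Fin K → ℝ)
    (hτ : ∀ k, τ k = ((Finset.univ.filter fun u => g u = k).card : ℝ) / N)
    (St : Fin K → ℝ) (hSt : ∀ i, St i = ∑ j, S i j * τ j)
    (I₁ : Finset (Fin N)) (hI₁ : I₁ = Finset.univ.filter fun u => g u = k₁)
    (hI₁ne : I₁.Nonempty)
    (θ : Fin N → ℝ) (Lθ Uθ : ℝ) (hLθ : 0 < Lθ)
    (hθ : ∀ u, Lθ ≤ θ u ∧ θ u ≤ Uθ)
    (hident : ∀ k : Fin K, ∑ u ∈ Finset.univ.filter (fun u => g u = k), θ u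
        = ((Finset.univ.filter fun u => g u = k).card : ℝ))
    (Rt : Finset (Fin N) → Fin 2 → Fin K → ℝ)
    (hRt0 : ∀ C b, Rt C 0 b = (∑ u ∈ C.filter fun u => g u = b, θ u) / N)
    (hRt1 : ∀ C b, Rt C 1 b = (∑ u ∈ (Cᶜ).filter fun u => g u = b, θ u) / N)
    (Gt : Finset (Fin N) → ℝ)
    (hGt : ∀ C, Gt C = (∑ i, ∑ j, Rt C 0 i * S i j * Rt C 0 j) /
        ((∑ i, ∑ j, Rt C 0 i * S i j * Rt C 0 j) + ∑ i, ∑ j, Rt C 0 i * S i j * Rt C 1 j))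
    (minSt : ℝ) (hminSt : ∀ i : Fin K, i ≠ k₁ → minSt ≤ St i)
    (hminSt' : ∃ i : Fin K, i ≠ k₁ ∧ minSt = St i)
    (maxS1 : ℝ) (hmaxS1 : ∀ j : Fin K, j ≠ k₁ → S k₁ j ≤ maxS1)
    (hmaxS1' : ∃ j : Fin K, j ≠ k₁ ∧ maxS1 = S k₁ j)
    (maxS : ℝ) (hmaxS : ∀ i j : Fin K, i ≠ k₁ → j ≠ k₁ → S i j ≤ maxS)
    (hmaxS' : ∃ i j : Fin K, i ≠ k₁ ∧ j ≠ k₁ ∧ maxS = S i j)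
    (c : ℝ) (hc : c = S k₁ k₁ * minSt - 2 * maxS1 * St k₁) (hcpos : 0 < c)
    (ε : ℝ) (hε : ε = c * τ k₁ / (2 * Uθ * St k₁ * maxS))
    (c' : ℝ)
    (hc' : c' = Lθ * min (S k₁ k₁ / St k₁)
        (1 / (2 * St k₁ ^ 2 / c + K * minSt / maxS))) :
    ∀ C : Finset (Fin N), C.Nonempty → (C ⊆ I₁ ∨ I₁ ⊆ C) →
      (C.card : ℝ) ≤ (I₁.card : ℝ) + ε * N →
      Gt C - Gt I₁ ≤ -c' * |(C.card : ℝ) - (I₁.card : ℝ)| / N :=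
  stmt_7_general N K hN hK g k₁ S hSsymm hSpos τ hτ St hSt I₁ hI₁ hI₁ne θ Lθ Uθ hLθ hθ hident Rt
    hRt0 hRt1 Gt hGt minSt hminSt hminSt' maxS1 hmaxS1 hmaxS1' maxS hmaxS hmaxS' c hc hcpos ε hε c'
    hc'
end

section
/- (Lemma 2, Cases n ≤ n_1.) For every nonempty subset C ⊆ I_1, the degree-corrected population objective satisfies G̃(C) = R̃_{11}·S_{11}/S̃_{1·}, where R̃_{11} = (1/N)Σ_{u∈C} θ_u; moreover τ_1 − R̃_{11} ≥ (L_θ/N)·(n_1 − |C|), G̃(I_1) = τ_1·S_{11}/S̃_{1·}, and consequently G̃(C) − G̃(I_1) ≤ −(L_θ·S_{11}/S̃_{1·})·(n_1 − |C|)/N. -/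
/-!
If `C ⊆ I₁`, the first row of `R̃(C)` is supported on block 1, where it equals
`x = (1/N) ∑_{u ∈ C} θ_u`. Both quadratic forms then collapse to `x · (S r)₁` for the relevant
row `r`, and since the two rows of `R̃(C)` add up to `τ`, the denominator is `x · S̃₁`, so
`G̃(C) = x S₁₁ / S̃₁`. The gap `τ₁ - x` is the `θ`-mass of `I₁ \ C` divided by `N`, at least
`L_θ / N` per missing vertex; since `G̃` is linear in `x` with slope `S₁₁ / S̃₁ ≥ 0`, this bounds
`G̃(C) - G̃(I₁)`.
-/

open BigOperators

open Finset

lemma sum_filter_eq_ite_of_forall_eq {V ι M : Type*} [DecidableEq ι] [AddCommMonoid M]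
    {g : V → ι} {C : Finset V} {k : ι} (hC : ∀ u ∈ C, g u = k) (θ : V → M) (b : ι) :
    ∑ u ∈ C.filter (fun u => g u = b), θ u = if b = k then ∑ u ∈ C, θ u else 0 := by
  rw [sum_filter]
  split_ifs with hb
  · exact sum_congr rfl fun u hu => if_pos (by rw [hC u hu, hb])
  · exact sum_eq_zero fun u hu => if_neg (by rw [hC u hu]; exact Ne.symm hb)

lemma sum_filter_add_sum_compl_filter {V M : Type*} [Fintype V] [DecidableEq V] [AddCommMonoid M]
    (C : Finset V) (p : V → Prop) [DecidablePred p] (f : V → M) :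
    ∑ u ∈ C.filter p, f u + ∑ u ∈ Cᶜ.filter p, f u = ∑ u ∈ univ.filter p, f u := by
  simp only [sum_filter]
  exact sum_add_sum_compl C _

lemma mul_card_sub_card_le_sum_sub_sum {α R : Type*} [DecidableEq α] [Ring R] [PartialOrder R]
    [IsOrderedRing R] {s t : Finset α} {θ : α → R} {L : R} (hts : t ⊆ s)
    (hL : ∀ u ∈ s \ t, L ≤ θ u) :
    L * ((s.card : R) - t.card) ≤ ∑ u ∈ s, θ u - ∑ u ∈ t, θ u := by
  rw [← sum_sdiff hts, add_sub_cancel_right, ← Nat.cast_sub (card_le_card hts),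
    ← card_sdiff_of_subset hts, ← Nat.cast_comm, ← nsmul_eq_mul]
  exact card_nsmul_le_sum _ _ _ hL

lemma mul_mul_div_mul_self {K : Type*} [Field K] (a b c : K) :
    a * b * a / (a * c) = a * (b / c) := by
  rcases eq_or_ne a 0 with rfl | ha
  · simp
  · rw [mul_comm a c, mul_div_mul_right _ _ ha, mul_div_assoc]

lemma sum_sum_mul_mul_of_eq_zero_of_ne {ι R : Type*} [Fintype ι] [Semiring R] {r s : ι → R}
    {S : Matrix ι ι R} {k : ι} (hr : ∀ i ≠ k, r i = 0) :
    ∑ i, ∑ j, r i * S i j * s j = r k * ∑ j, S k j * s j := by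
  rw [Fintype.sum_eq_single k fun i hi => by simp [hr i hi], mul_sum]
  simp only [mul_assoc]

lemma self_div_self_add_cross_of_eq_zero_of_ne {ι K : Type*} [Fintype ι] [Field K]
    {r₀ r₁ τ : ι → K} {S : Matrix ι ι K} {k : ι} (hr₀ : ∀ i ≠ k, r₀ i = 0)
    (hτ : ∀ i, r₀ i + r₁ i = τ i) :
    (∑ i, ∑ j, r₀ i * S i j * r₀ j) /
        ((∑ i, ∑ j, r₀ i * S i j * r₀ j) + ∑ i, ∑ j, r₀ i * S i j * r₁ j)
      = r₀ k * (S k k / ∑ j, S k j * τ j) := by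
  have hSr₀ : ∑ j, S k j * r₀ j = S k k * r₀ k :=
    Fintype.sum_eq_single k fun j hj => by simp [hr₀ j hj]
  have hr₁ : r₁ = τ - r₀ := funext fun i => by simp [← hτ i]
  simp only [sum_sum_mul_mul_of_eq_zero_of_ne hr₀, hr₁, Pi.sub_apply, mul_sub, sum_sub_distrib,
    hSr₀]
  rw [add_sub_cancel, ← mul_assoc, mul_mul_div_mul_self]

theorem stmt_8_general (N K : ℕ)
    (g : Fin N → Fin K)
    (k₁ : Fin K)
    (S : Matrix (Fin K) (Fin K) ℝ) (hSpos : ∀ i j, 0 < S i j)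
    (τ : Fin K → ℝ)
    (hτ : ∀ k, τ k = ((Finset.univ.filter fun u => g u = k).card : ℝ) / N)
    (St : Fin K → ℝ) (hSt : ∀ i, St i = ∑ j, S i j * τ j)
    (I₁ : Finset (Fin N)) (hI₁ : I₁ = Finset.univ.filter fun u => g u = k₁)
    (θ : Fin N → ℝ) (Lθ Uθ : ℝ)
    (hθ : ∀ u, Lθ ≤ θ u ∧ θ u ≤ Uθ)
    (hident : ∀ k : Fin K, ∑ u ∈ Finset.univ.filter (fun u => g u = k), θ u
        = ((Finset.univ.filter fun u => g u = k).card : ℝ))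
    (Rt : Finset (Fin N) → Fin 2 → Fin K → ℝ)
    (hRt0 : ∀ C b, Rt C 0 b = (∑ u ∈ C.filter fun u => g u = b, θ u) / N)
    (hRt1 : ∀ C b, Rt C 1 b = (∑ u ∈ (Cᶜ).filter fun u => g u = b, θ u) / N)
    (Gt : Finset (Fin N) → ℝ)
    (hGt : ∀ C, Gt C = (∑ i, ∑ j, Rt C 0 i * S i j * Rt C 0 j) /
        ((∑ i, ∑ j, Rt C 0 i * S i j * Rt C 0 j)
          + ∑ i, ∑ j, Rt C 0 i * S i j * Rt C 1 j)) :
    (∀ C : Finset (Fin N), C.Nonempty → C ⊆ I₁ →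
        Gt C = ((∑ u ∈ C, θ u) / N) * (S k₁ k₁ / St k₁) ∧
        Rt C 0 k₁ = (∑ u ∈ C, θ u) / N ∧
        (Lθ / N) * ((I₁.card : ℝ) - (C.card : ℝ)) ≤ τ k₁ - (∑ u ∈ C, θ u) / N) ∧
    Gt I₁ = τ k₁ * (S k₁ k₁ / St k₁) ∧
    (∀ C : Finset (Fin N), C.Nonempty → C ⊆ I₁ →
        Gt C - Gt I₁ ≤
          -(Lθ * S k₁ k₁ / St k₁) * (((I₁.card : ℝ) - (C.card : ℝ)) / N)) := by
  have hRt0_of_subset (C : Finset (Fin N)) (hC : C ⊆ I₁) (b : Fin K) :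
      Rt C 0 b = if b = k₁ then (∑ u ∈ C, θ u) / N else 0 := by
    have hfiber : ∀ u ∈ C, g u = k₁ := fun u hu => by simpa [hI₁] using hC hu
    rw [hRt0, sum_filter_eq_ite_of_forall_eq hfiber]
    split_ifs <;> simp
  have hRt_add (C : Finset (Fin N)) (b : Fin K) : Rt C 0 b + Rt C 1 b = τ b := by
    rw [hRt0, hRt1, ← add_div, sum_filter_add_sum_compl_filter, hident, hτ]
  have hGt_of_subset (C : Finset (Fin N)) (hC : C ⊆ I₁) :
      Gt C = (∑ u ∈ C, θ u) / N * (S k₁ k₁ / St k₁) := by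
    rw [hGt, hSt, self_div_self_add_cross_of_eq_zero_of_ne (k := k₁)
      (fun b hb => by rw [hRt0_of_subset C hC, if_neg hb]) (hRt_add C),
      hRt0_of_subset C hC, if_pos rfl]
  have hτ₁ : τ k₁ = (∑ u ∈ I₁, θ u) / N := by rw [hI₁, hident, hτ]
  have hgap (C : Finset (Fin N)) (hC : C ⊆ I₁) :
      Lθ / N * ((I₁.card : ℝ) - C.card) ≤ τ k₁ - (∑ u ∈ C, θ u) / N := by
    rw [hτ₁, ← sub_div, div_mul_eq_mul_div]
    gcongr
    exact mul_card_sub_card_le_sum_sub_sum hC fun u _ => (hθ u).1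
  have hGI : Gt I₁ = τ k₁ * (S k₁ k₁ / St k₁) := by rw [hGt_of_subset I₁ subset_rfl, hτ₁]
  have hratio : 0 ≤ S k₁ k₁ / St k₁ := by
    refine div_nonneg (hSpos _ _).le ?_
    rw [hSt]
    exact sum_nonneg fun j _ => mul_nonneg (hSpos _ _).le (by rw [hτ]; positivity)
  refine ⟨fun C _ hC => ⟨hGt_of_subset C hC, by rw [hRt0_of_subset C hC, if_pos rfl], hgap C hC⟩,
    hGI, fun C _ hC => ?_⟩
  calc Gt C - Gt I₁ = -(τ k₁ - (∑ u ∈ C, θ u) / N) * (S k₁ k₁ / St k₁) := by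
        rw [hGt_of_subset C hC, hGI]; ring
    _ ≤ -(Lθ / N * ((I₁.card : ℝ) - C.card)) * (S k₁ k₁ / St k₁) := by
        gcongr
        exact hgap C hC
    _ = -(Lθ * S k₁ k₁ / St k₁) * (((I₁.card : ℝ) - C.card) / N) := by ring

theorem stmt_8 (N K : ℕ) (hN : 1 ≤ N) (hK : 2 ≤ K)
    (g : Fin N → Fin K)
    (k₁ : Fin K) (hk₁ : (k₁ : ℕ) = 0)
    (S : Matrix (Fin K) (Fin K) ℝ) (hSsymm : S.IsSymm) (hSpos : ∀ i j, 0 < S i j)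
    (τ : Fin K → ℝ)
    (hτ : ∀ k, τ k = ((Finset.univ.filter fun u => g u = k).card : ℝ) / N)
    (St : Fin K → ℝ) (hSt : ∀ i, St i = ∑ j, S i j * τ j)
    (I₁ : Finset (Fin N)) (hI₁ : I₁ = Finset.univ.filter fun u => g u = k₁)
    (hI₁ne : I₁.Nonempty)
    (θ : Fin N → ℝ) (Lθ Uθ : ℝ) (hLθ : 0 < Lθ)
    (hθ : ∀ u, Lθ ≤ θ u ∧ θ u ≤ Uθ)
    (hident : ∀ k : Fin K, ∑ u ∈ Finset.univ.filter (fun u => g u = k), θ u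
        = ((Finset.univ.filter fun u => g u = k).card : ℝ))
    (Rt : Finset (Fin N) → Fin 2 → Fin K → ℝ)
    (hRt0 : ∀ C b, Rt C 0 b = (∑ u ∈ C.filter fun u => g u = b, θ u) / N)
    (hRt1 : ∀ C b, Rt C 1 b = (∑ u ∈ (Cᶜ).filter fun u => g u = b, θ u) / N)
    (Gt : Finset (Fin N) → ℝ)
    (hGt : ∀ C, Gt C = (∑ i, ∑ j, Rt C 0 i * S i j * Rt C 0 j) /
        ((∑ i, ∑ j, Rt C 0 i * S i j * Rt C 0 j)
          + ∑ i, ∑ j, Rt C 0 i * S i j * Rt C 1 j)) :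
    (∀ C : Finset (Fin N), C.Nonempty → C ⊆ I₁ →
        Gt C = ((∑ u ∈ C, θ u) / N) * (S k₁ k₁ / St k₁) ∧
        Rt C 0 k₁ = (∑ u ∈ C, θ u) / N ∧
        (Lθ / N) * ((I₁.card : ℝ) - (C.card : ℝ)) ≤ τ k₁ - (∑ u ∈ C, θ u) / N) ∧
    Gt I₁ = τ k₁ * (S k₁ k₁ / St k₁) ∧
    (∀ C : Finset (Fin N), C.Nonempty → C ⊆ I₁ →
        Gt C - Gt I₁ ≤
          -(Lθ * S k₁ k₁ / St k₁) * (((I₁.card : ℝ) - (C.card : ℝ)) / N)) :=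
  stmt_8_general N K g k₁ S hSpos τ hτ St hSt I₁ hI₁ θ Lθ Uθ hθ hident Rt hRt0 hRt1 Gt hGt
end
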